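/- arXiv:2205.13819 — 9 statements merged into one kernel-verified Lean document; each statement's English description precedes it below -/
import Mathlib

section
/- Let N be a zero-symmetric unital right near-ring and a ∈ N. If a is left morphic, then a·u and u·a are left morphic for every unit u of N. -/
/-- A zero-symmetric unital right near-ring: an additive group (not necessarily
abelian) and a multiplicative monoid with `1 ≠ 0`, satisfying the right
distributive law, and zero-symmetric (`x * 0 = 0`). -/
class ZSNearRing (N : Type*) extends AddGroup N, Monoid N where
  right_distrib : ∀ x y z : N, (x + y) * z = x * z + y * z
  mul_zero : ∀ x : N, x * 0 = 0
  one_ne_zero : (1 : N) ≠ (0 : N)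

namespace ZSNearRing

variable {N : Type*} [ZSNearRing N]

/-- The set `Na = {n·a : n ∈ N}`. -/
def NSet (a : N) : Set N := {x | ∃ n : N, x = n * a}

/-- The left annihilator `(0 :ₗ a) = {x ∈ N : x·a = 0}`. -/
def lAnn (a : N) : Set N := {x | x * a = 0}

/-- `a` is left morphic if there is `b` with `Na = (0 :ₗ b)` and `Nb = (0 :ₗ a)`. -/
def IsLeftMorphic (a : N) : Prop := ∃ b : N, NSet a = lAnn b ∧ NSet b = lAnn a

end ZSNearRing

open ZSNearRing

private lemma zsnr_zero_mul {N : Type*} [ZSNearRing N] (x : N) : (0 : N) * x = 0 := by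
  have h := ZSNearRing.right_distrib (0 : N) 0 x
  rw [add_zero] at h
  exact (left_eq_add.mp h)

theorem stmt1 {N : Type*} [ZSNearRing N] (a : N) (ha : IsLeftMorphic a)
    (u v : N) (huv : u * v = 1) (hvu : v * u = 1) :
    IsLeftMorphic (a * u) ∧ IsLeftMorphic (u * a) := by
  obtain ⟨b, h1, h2⟩ := ha
  -- key cancellation identities
  have kuv : ∀ x y : N, x * u * (v * y) = x * y := fun x y => by
    rw [mul_assoc, ← mul_assoc u v y, huv, one_mul]
  have kvu : ∀ x y : N, x * v * (u * y) = x * y := fun x y => by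
    rw [mul_assoc, ← mul_assoc v u y, hvu, one_mul]
  have ku : ∀ x : N, x * u * v = x := fun x => by rw [mul_assoc, huv, mul_one]
  have kv : ∀ x : N, x * v * u = x := fun x => by rw [mul_assoc, hvu, mul_one]
  constructor
  · refine ⟨v * b, ?_, ?_⟩
    · ext x
      constructor
      · rintro ⟨n, rfl⟩
        show n * (a * u) * (v * b) = 0
        have hna : n * a ∈ lAnn b := h1 ▸ (⟨n, rfl⟩ : n * a ∈ NSet a)
        have hna : n * a * b = 0 := hna
        rw [← mul_assoc n a u, kuv, hna]
      · intro hx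
        have hxvb : x * (v * b) = 0 := hx
        have hxv : x * v * b = 0 := by rwa [mul_assoc]
        obtain ⟨n, hn⟩ : x * v ∈ NSet a := h1 ▸ hxv
        refine ⟨n, ?_⟩
        have := congrArg (· * u) hn
        simpa [kv, mul_assoc] using this
    · ext x
      constructor
      · rintro ⟨n, rfl⟩
        show n * (v * b) * (a * u) = 0
        have h0 : n * v * b ∈ lAnn a := h2 ▸ (⟨n * v, rfl⟩ : n * v * b ∈ NSet b)
        have h0 : n * v * b * a = 0 := h0
        rw [← mul_assoc n v b, ← mul_assoc, h0, zsnr_zero_mul]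
      · intro hx
        have hxa : x * (a * u) = 0 := hx
        have hxa' : x * a = 0 := by
          have h' : x * a * u * v = 0 * v := by rw [mul_assoc x a u, hxa, zsnr_zero_mul]
          rwa [ku, zsnr_zero_mul] at h'
        obtain ⟨n, hn⟩ : x ∈ NSet b := h2 ▸ hxa'
        exact ⟨n * u, by rw [hn, kuv]⟩
  · refine ⟨b * v, ?_, ?_⟩
    · ext x
      constructor
      · rintro ⟨n, rfl⟩
        show n * (u * a) * (b * v) = 0
        have h0 : n * u * a ∈ lAnn b := h1 ▸ (⟨n * u, rfl⟩ : n * u * a ∈ NSet a)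
        have h0 : n * u * a * b = 0 := h0
        rw [← mul_assoc n u a, ← mul_assoc, h0, zsnr_zero_mul]
      · intro hx
        have hxb : x * (b * v) = 0 := hx
        have hxb' : x * b = 0 := by
          have h' : x * b * v * u = 0 * u := by rw [mul_assoc x b v, hxb, zsnr_zero_mul]
          rwa [kv, zsnr_zero_mul] at h'
        obtain ⟨n, hn⟩ : x ∈ NSet a := h1 ▸ hxb'
        exact ⟨n * v, by rw [hn, kvu]⟩
    · ext x
      constructor
      · rintro ⟨n, rfl⟩
        show n * (b * v) * (u * a) = 0
        have hnb : n * b ∈ lAnn a := h2 ▸ (⟨n, rfl⟩ : n * b ∈ NSet b)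
        have hnb : n * b * a = 0 := hnb
        rw [← mul_assoc n b v, kvu, hnb]
      · intro hx
        have hxua : x * (u * a) = 0 := hx
        have hxu : x * u * a = 0 := by rwa [mul_assoc]
        obtain ⟨n, hn⟩ : x * u ∈ NSet b := h2 ▸ hxu
        refine ⟨n, ?_⟩
        have := congrArg (· * v) hn
        simpa [ku, mul_assoc] using this
end

section
/- Let N be a zero-symmetric unital right near-ring and let a ∈ N be left morphic. Then the following are equivalent: (1) (0:ₗ a) = {0}; (2) Na = N; (3) a is a unit of N. -/
namespace ZSNearRing

variable {N : Type*} [ZSNearRing N]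

lemma zero_mul' (a : N) : (0 : N) * a = 0 := by
  have h := right_distrib (0 : N) 0 a
  rw [add_zero] at h
  have h2 : (0 : N) * a + 0 = 0 * a + 0 * a := by rw [add_zero]; exact h
  exact (add_left_cancel h2).symm

lemma neg_mul' (x a : N) : (-x) * a = -(x * a) := by
  have h := right_distrib x (-x) a
  rw [add_neg_cancel, zero_mul'] at h
  exact eq_neg_of_add_eq_zero_right h.symm

end ZSNearRing

open ZSNearRing

theorem stmt2 {N : Type*} [ZSNearRing N] (a : N) (ha : IsLeftMorphic a) :
    List.TFAE [lAnn a = ({0} : Set N),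
               NSet a = (Set.univ : Set N),
               ∃ v : N, a * v = 1 ∧ v * a = 1] := by
  obtain ⟨b, hab, hba⟩ := ha
  tfae_have 1 → 2 := by
    intro h1
    -- Nb = lAnn a = {0}, so b = 0
    have hb : b = 0 := by
      have : b ∈ NSet b := ⟨1, (one_mul b).symm⟩
      rw [hba, h1] at this
      simpa using this
    rw [hab, hb]
    ext x
    simp [lAnn, ZSNearRing.mul_zero]
  tfae_have 2 → 3 := by
    intro h2
    -- 1 ∈ Na, so ∃ v, v * a = 1
    have h1 : (1 : N) ∈ NSet a := by rw [h2]; trivial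
    obtain ⟨v, hv⟩ := h1
    refine ⟨v, ?_, hv.symm⟩
    -- first show lAnn a = {0}
    have hb0 : b = 0 := by
      have h1b : (1 : N) ∈ lAnn b := by rw [← hab, h2]; trivial
      simpa [lAnn] using h1b
    have hann : lAnn a = ({0} : Set N) := by
      rw [← hba, hb0]
      ext x
      constructor
      · rintro ⟨n, hn⟩; simp [hn, ZSNearRing.mul_zero]
      · rintro hx; exact ⟨0, by simp_all [ZSNearRing.mul_zero]⟩
    -- (a*v + -1) * a = a*v*a - a = a - a = 0
    have key : (a * v + -1) ∈ lAnn a := by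
      show (a * v + -1) * a = 0
      rw [ZSNearRing.right_distrib, neg_mul', one_mul, mul_assoc, ← hv, mul_one,
        add_neg_cancel]
    rw [hann] at key
    have : a * v + -1 = 0 := key
    have := congrArg (· + 1) this
    simpa using this
  tfae_have 3 → 1 := by
    rintro ⟨v, hav, hva⟩
    ext x
    simp only [lAnn, Set.mem_setOf_eq, Set.mem_singleton_iff]
    constructor
    · intro hx
      calc x = x * a * v := by rw [mul_assoc, hav, mul_one]
        _ = 0 := by rw [hx, zero_mul']
    · rintro rfl; exact zero_mul' a
  tfae_finish
end

section
/- Let N₁ and N₂ be zero-symmetric unital right near-rings and equip N₁ × N₂ with componentwise addition and multiplication. Then an element (a₁, a₂) ∈ N₁ × N₂ is left morphic if and only if a₁ is left morphic in N₁ and a₂ is left morphic in N₂. Consequently, N₁ × N₂ is a left morphic near-ring if and only if both N₁ and N₂ are left morphic near-rings. -/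
open ZSNearRing

/-- The product of two zero-symmetric unital right near-rings, with
componentwise addition and multiplication. -/
instance prodZSNearRing {N₁ N₂ : Type*} [ZSNearRing N₁] [ZSNearRing N₂] :
    ZSNearRing (N₁ × N₂) :=
  { (inferInstance : AddGroup (N₁ × N₂)), (inferInstance : Monoid (N₁ × N₂)) with
    right_distrib := by
      intro x y z
      ext
      · exact ZSNearRing.right_distrib x.1 y.1 z.1
      · exact ZSNearRing.right_distrib x.2 y.2 z.2
    mul_zero := by
      intro x
      ext
      · exact ZSNearRing.mul_zero x.1
      · exact ZSNearRing.mul_zero x.2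
    one_ne_zero := fun h => ZSNearRing.one_ne_zero (congrArg Prod.fst h) }


lemma ZSNearRing.zero_mul'_s3 {N : Type*} [ZSNearRing N] (a : N) : (0 : N) * a = 0 := by
  have h := ZSNearRing.right_distrib (0 : N) 0 a
  rw [add_zero] at h
  have := add_left_cancel (a := (0:N)*a) (b := 0) (c := (0:N)*a)
  -- simpler: from h : 0*a = 0*a + 0*a
  have h2 : (0:N)*a + 0 = (0:N)*a + (0:N)*a := by rw [add_zero]; exact h
  exact (add_left_cancel h2).symm

lemma mem_NSet_prod {N₁ N₂ : Type*} [ZSNearRing N₁] [ZSNearRing N₂]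
    (a : N₁ × N₂) (x : N₁ × N₂) :
    x ∈ NSet a ↔ x.1 ∈ NSet a.1 ∧ x.2 ∈ NSet a.2 := by
  constructor
  · rintro ⟨n, rfl⟩
    exact ⟨⟨n.1, rfl⟩, ⟨n.2, rfl⟩⟩
  · rintro ⟨⟨n₁, h₁⟩, ⟨n₂, h₂⟩⟩
    exact ⟨(n₁, n₂), Prod.ext h₁ h₂⟩

lemma mem_lAnn_prod {N₁ N₂ : Type*} [ZSNearRing N₁] [ZSNearRing N₂]
    (a : N₁ × N₂) (x : N₁ × N₂) :
    x ∈ lAnn a ↔ x.1 ∈ lAnn a.1 ∧ x.2 ∈ lAnn a.2 := by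
  simp only [lAnn, Set.mem_setOf_eq, Prod.ext_iff]
  rfl

theorem stmt3 {N₁ N₂ : Type*} [ZSNearRing N₁] [ZSNearRing N₂] :
    (∀ a : N₁ × N₂, IsLeftMorphic a ↔ IsLeftMorphic a.1 ∧ IsLeftMorphic a.2) ∧
    ((∀ a : N₁ × N₂, IsLeftMorphic a) ↔
      (∀ a₁ : N₁, IsLeftMorphic a₁) ∧ (∀ a₂ : N₂, IsLeftMorphic a₂)) := by
  have main : ∀ a : N₁ × N₂, IsLeftMorphic a ↔ IsLeftMorphic a.1 ∧ IsLeftMorphic a.2 := by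
    intro a
    constructor
    · rintro ⟨b, h1, h2⟩
      have e1 : ∀ x : N₁ × N₂, x ∈ NSet a ↔ x ∈ lAnn b := fun x => by rw [h1]
      have e2 : ∀ x : N₁ × N₂, x ∈ NSet b ↔ x ∈ lAnn a := fun x => by rw [h2]
      constructor
      · refine ⟨b.1, Set.ext fun x => ?_, Set.ext fun x => ?_⟩
        · have := e1 (x, 0)
          rw [mem_NSet_prod, mem_lAnn_prod] at this
          constructor
          · intro hx
            exact ((this.1 ⟨hx, ⟨0, (ZSNearRing.zero_mul'_s3 a.2).symm⟩⟩)).1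
          · intro hx
            exact (this.2 ⟨hx, ZSNearRing.zero_mul'_s3 b.2⟩).1
        · have := e2 (x, 0)
          rw [mem_NSet_prod, mem_lAnn_prod] at this
          constructor
          · intro hx
            exact ((this.1 ⟨hx, ⟨0, (ZSNearRing.zero_mul'_s3 b.2).symm⟩⟩)).1
          · intro hx
            exact (this.2 ⟨hx, ZSNearRing.zero_mul'_s3 a.2⟩).1
      · refine ⟨b.2, Set.ext fun x => ?_, Set.ext fun x => ?_⟩
        · have := e1 (0, x)
          rw [mem_NSet_prod, mem_lAnn_prod] at this
          constructor
          · intro hx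
            exact ((this.1 ⟨⟨0, (ZSNearRing.zero_mul'_s3 a.1).symm⟩, hx⟩)).2
          · intro hx
            exact (this.2 ⟨ZSNearRing.zero_mul'_s3 b.1, hx⟩).2
        · have := e2 (0, x)
          rw [mem_NSet_prod, mem_lAnn_prod] at this
          constructor
          · intro hx
            exact ((this.1 ⟨⟨0, (ZSNearRing.zero_mul'_s3 b.1).symm⟩, hx⟩)).2
          · intro hx
            exact (this.2 ⟨ZSNearRing.zero_mul'_s3 a.1, hx⟩).2
    · rintro ⟨⟨b₁, h11, h12⟩, ⟨b₂, h21, h22⟩⟩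
      refine ⟨(b₁, b₂), Set.ext fun x => ?_, Set.ext fun x => ?_⟩
      · rw [mem_NSet_prod, mem_lAnn_prod]
        exact and_congr (Set.ext_iff.mp h11 x.1) (Set.ext_iff.mp h21 x.2)
      · rw [mem_NSet_prod, mem_lAnn_prod]
        exact and_congr (Set.ext_iff.mp h12 x.1) (Set.ext_iff.mp h22 x.2)
  refine ⟨main, ?_⟩
  constructor
  · intro h
    exact ⟨fun a₁ => ((main (a₁, 1)).1 (h _)).1, fun a₂ => ((main (1, a₂)).1 (h _)).2⟩
  · intro ⟨h₁, h₂⟩ a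
    exact (main a).2 ⟨h₁ a.1, h₂ a.2⟩
end

section
/- Let N be a zero-symmetric unital right near-ring and let ω ∈ N be an idempotent left morphic element. Then: ω·(1−ω) = 0; 1−ω is idempotent; N·ω = (0:ₗ (1−ω)); N·(1−ω) = (0:ₗ ω); 1−(1−ω) = ω; and 1−ω is left morphic. -/
open ZSNearRing

section Aux

variable {N : Type*} [ZSNearRing N]

lemma zsnr_zero_mul_s8 (y : N) : (0 : N) * y = 0 := by
  have h := ZSNearRing.right_distrib (0:N) 0 y
  rw [add_zero] at h
  have h' : (0:N) * y + 0 = 0 * y + 0 * y := by rw [add_zero]; exact h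
  exact (add_left_cancel h').symm

lemma zsnr_neg_mul (x y : N) : (-x) * y = -(x * y) := by
  have h := ZSNearRing.right_distrib x (-x) y
  rw [add_neg_cancel, zsnr_zero_mul_s8] at h
  exact (neg_eq_of_add_eq_zero_right h.symm).symm

lemma zsnr_sub_mul (x y z : N) : (x - y) * z = x * z - y * z := by
  rw [sub_eq_add_neg, sub_eq_add_neg, ZSNearRing.right_distrib, zsnr_neg_mul]

end Aux

theorem stmt8 {N : Type*} [ZSNearRing N] (ω : N)
    (hid : ω * ω = ω) (hm : IsLeftMorphic ω) :
    ω * (1 - ω) = 0 ∧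
    (1 - ω) * (1 - ω) = 1 - ω ∧
    NSet ω = lAnn (1 - ω) ∧
    NSet (1 - ω) = lAnn ω ∧
    1 - (1 - ω) = ω ∧
    IsLeftMorphic (1 - ω) := by
  obtain ⟨b, h1, h2⟩ := hm
  -- basic consequences
  have hfω : (1 - ω) * ω = 0 := by
    rw [zsnr_sub_mul, one_mul, hid, sub_self]
  have hωb : ω * b = 0 := by
    have : ω ∈ NSet ω := ⟨1, (one_mul ω).symm⟩
    rw [h1] at this; exact this
  have hfb : (1 - ω) * b = b := by
    rw [zsnr_sub_mul, one_mul, hωb, sub_zero]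
  -- membership helper: anything killing b lies in Nω, and anything = k*ω with
  -- (·*ω = 0) must be 0
  have mem_Nω : ∀ x : N, x * b = 0 → ∃ k : N, x = k * ω := by
    intro x hx
    have : x ∈ lAnn b := hx
    rw [← h1] at this; exact this
  have kω_zero : ∀ x : N, (∃ k : N, x = k * ω) → x * ω = 0 → x = 0 := by
    rintro x ⟨k, rfl⟩ hx
    calc k * ω = k * (ω * ω) := by rw [hid]
    _ = (k * ω) * ω := (mul_assoc k ω ω).symm
    _ = 0 := hx
  -- Claim A : ω * (1 - ω) = 0
  have hA : ω * (1 - ω) = 0 := by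
    have hxb : (ω * (1 - ω)) * b = 0 := by
      rw [mul_assoc, hfb, hωb]
    have hxω : (ω * (1 - ω)) * ω = 0 := by
      rw [mul_assoc, hfω, ZSNearRing.mul_zero]
    exact kω_zero _ (mem_Nω _ hxb) hxω
  -- Claim B : (1 - ω) is idempotent
  have hB : (1 - ω) * (1 - ω) = 1 - ω := by
    rw [zsnr_sub_mul, one_mul, hA, sub_zero]
  -- Claim C : NSet ω = lAnn (1 - ω)
  have hC : NSet ω = lAnn (1 - ω) := by
    ext x
    constructor
    · rintro ⟨n, rfl⟩
      show (n * ω) * (1 - ω) = 0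
      rw [mul_assoc, hA, ZSNearRing.mul_zero]
    · intro hx
      have hx' : x * (1 - ω) = 0 := hx
      have hxb : x * b = 0 := by
        rw [← hfb, ← mul_assoc, hx', zsnr_zero_mul_s8]
      exact mem_Nω x hxb
  -- Claim D : NSet (1 - ω) = lAnn ω
  have hD : NSet (1 - ω) = lAnn ω := by
    ext x
    constructor
    · rintro ⟨n, rfl⟩
      show (n * (1 - ω)) * ω = 0
      rw [mul_assoc, hfω, ZSNearRing.mul_zero]
    · intro hx
      have hx' : x * ω = 0 := hx
      set y := x - x * (1 - ω) with hy
      have hyω : y * ω = 0 := by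
        rw [hy, zsnr_sub_mul, hx', mul_assoc, hfω, ZSNearRing.mul_zero, sub_zero]
      have hyf : y * (1 - ω) = 0 := by
        rw [hy, zsnr_sub_mul, mul_assoc, hB, sub_self]
      have hyNω : ∃ k : N, y = k * ω := by
        have : y ∈ lAnn (1 - ω) := hyf
        rw [← hC] at this; exact this
      have : y = 0 := kω_zero y hyNω hyω
      have hxeq : x = x * (1 - ω) := by
        have := sub_eq_zero.mp (hy ▸ this)
        exact this
      exact ⟨x, hxeq⟩
  -- Claim E : 1 - (1 - ω) = ω
  have hE : 1 - (1 - ω) = ω := by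
    set d := (ω + (1 - ω)) - 1 with hd
    have hdω : d * ω = 0 := by
      rw [hd, zsnr_sub_mul, ZSNearRing.right_distrib, hid, hfω, add_zero, one_mul,
        sub_self]
    have hdf : d * (1 - ω) = 0 := by
      rw [hd, zsnr_sub_mul, ZSNearRing.right_distrib, hA, hB, zero_add, one_mul,
        sub_self]
    have hdNω : ∃ k : N, d = k * ω := by
      have : d ∈ lAnn (1 - ω) := hdf
      rw [← hC] at this; exact this
    have hd0 : d = 0 := kω_zero d hdNω hdω
    have hsum : ω + (1 - ω) = 1 := by
      have := sub_eq_zero.mp (hd ▸ hd0)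
      exact this
    calc 1 - (1 - ω) = (ω + (1 - ω)) - (1 - ω) := by rw [hsum]
    _ = ω := add_sub_cancel_right ω (1 - ω)
  exact ⟨hA, hB, hC, hD, hE, ⟨ω, hD, hC⟩⟩
end

section
/- Let N be a zero-symmetric unital right near-ring and let e ∈ N be an idempotent. The following are equivalent: (1) e is left morphic; (2) x·(1−e) = −(x·e) + x for all x ∈ N; (3) x·(1−e) = x − x·e for all x ∈ N; (4) (0:ₗ e) ∩ (0:ₗ (1−e)) = {0} and e·(1−e) = 0. -/
open ZSNearRing

section Aux
variable {N : Type*} [ZSNearRing N]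

lemma zsn_rd (x y z : N) : (x + y) * z = x * z + y * z := ZSNearRing.right_distrib x y z
lemma zsn_mz (x : N) : x * 0 = 0 := ZSNearRing.mul_zero x

lemma zsn_zm (a : N) : (0 : N) * a = 0 := by
  have h := zsn_rd (0 : N) 0 a
  rw [add_zero] at h
  exact left_eq_add.mp h

lemma zsn_nm (x a : N) : (-x) * a = -(x * a) := by
  have h : x * a + (-x) * a = 0 := by rw [← zsn_rd, add_neg_cancel, zsn_zm]
  exact eq_neg_of_add_eq_zero_right h

lemma zsn_sm (x y a : N) : (x - y) * a = x * a - y * a := by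
  rw [sub_eq_add_neg, zsn_rd, zsn_nm, ← sub_eq_add_neg]

lemma zsn_1e_e (e : N) (hid : e * e = e) : (1 - e) * e = 0 := by
  rw [zsn_sm, one_mul, hid, sub_self]

end Aux

lemma zsn_key1 {G : Type*} [AddGroup G] (a x : G)
    (h : (-a + x) + (-a + x) = -(a + a) + (x + x)) : x + -a = -a + x := by
  rw [neg_add_rev] at h
  rw [add_assoc, add_assoc] at h
  have h2 := add_left_cancel h
  rw [← add_assoc, ← add_assoc] at h2
  exact add_right_cancel h2

lemma zsn_key2 {G : Type*} [AddGroup G] (a x : G)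
    (h : (x + -a) + (x + -a) = (x + x) + (-a + -a)) : x + -a = -a + x := by
  rw [add_assoc, add_assoc] at h
  have h2 := add_left_cancel h
  rw [← add_assoc, ← add_assoc] at h2
  exact (add_right_cancel h2).symm

theorem stmt10 {N : Type*} [ZSNearRing N] (e : N) (hid : e * e = e) :
    List.TFAE [
      IsLeftMorphic e,
      ∀ x : N, x * (1 - e) = -(x * e) + x,
      ∀ x : N, x * (1 - e) = x - x * e,
      lAnn e ∩ lAnn (1 - e) = ({0} : Set N) ∧ e * (1 - e) = 0] := by
  tfae_have 2 → 3 := by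
    intro h x
    have E : x * (1 - e) + x * (1 - e) = -((x + x) * e) + (x + x) := by
      rw [← zsn_rd, h]
    rw [h x, zsn_rd] at E
    have comm := zsn_key1 (x * e) x E
    rw [h x, sub_eq_add_neg, comm]
  tfae_have 3 → 2 := by
    intro h x
    have E : x * (1 - e) + x * (1 - e) = (x + x) - (x + x) * e := by
      rw [← zsn_rd, h]
    rw [h x, zsn_rd, sub_eq_add_neg, sub_eq_add_neg, neg_add_rev] at E
    have comm := zsn_key2 (x * e) x E
    rw [h x, sub_eq_add_neg, comm]
  tfae_have 2 → 4 := by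
    intro h
    constructor
    · ext y
      simp only [Set.mem_inter_iff, Set.mem_singleton_iff, lAnn, Set.mem_setOf_eq]
      constructor
      · rintro ⟨h1, h2⟩
        have := h y
        rw [h1, h2, neg_zero, zero_add] at this
        exact this.symm
      · rintro rfl
        exact ⟨zsn_zm e, zsn_zm (1 - e)⟩
    · have := h e
      rwa [hid, neg_add_cancel] at this
  tfae_have 4 → 2 := by
    rintro ⟨hann, he1e⟩ x
    set z := x * (1 - e) + -(-(x * e) + x) with hz
    have hze : z * e = 0 := by
      rw [hz, neg_add_rev, neg_neg, zsn_rd, zsn_rd, zsn_nm, mul_assoc,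
        zsn_1e_e e hid, zsn_mz, mul_assoc, hid, zero_add, neg_add_cancel]
    have h1e1e : (1 - e) * (1 - e) = 1 - e := by
      rw [zsn_sm, one_mul, he1e, sub_zero]
    have hz1e : z * (1 - e) = 0 := by
      rw [hz, neg_add_rev, neg_neg, zsn_rd, zsn_rd, zsn_nm, mul_assoc, h1e1e,
        mul_assoc, he1e, zsn_mz, add_zero, add_neg_cancel]
    have hz0 : z = 0 := by
      have hmem : z ∈ lAnn e ∩ lAnn (1 - e) := ⟨hze, hz1e⟩
      rw [hann] at hmem
      exact hmem
    rw [hz] at hz0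
    have := sub_eq_zero.mp (by rwa [← sub_eq_add_neg] at hz0)
    exact this
  tfae_have 2 → 1 := by
    intro h
    have e1e : e * (1 - e) = 0 := by
      have := h e; rwa [hid, neg_add_cancel] at this
    refine ⟨1 - e, ?_, ?_⟩
    · ext y
      simp only [NSet, lAnn, Set.mem_setOf_eq]
      constructor
      · rintro ⟨n, rfl⟩
        rw [mul_assoc, e1e, zsn_mz]
      · intro hy
        have h0 : -(y * e) + y = 0 := by rw [← h y, hy]
        exact ⟨y, (neg_add_eq_zero.mp h0).symm⟩
    · ext y
      simp only [NSet, lAnn, Set.mem_setOf_eq]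
      constructor
      · rintro ⟨n, rfl⟩
        rw [mul_assoc, zsn_1e_e e hid, zsn_mz]
      · intro hy
        refine ⟨y, ?_⟩
        rw [h y, hy, neg_zero, zero_add]
  tfae_have 1 → 2 := by
    rintro ⟨b, hNe, hNb⟩
    have memNe : ∀ z : N, z ∈ NSet e ↔ ∃ n : N, z = n * e := fun z => Iff.rfl
    have heb : e * b = 0 := by
      have : e ∈ NSet e := ⟨1, (one_mul e).symm⟩
      rw [hNe] at this; exact this
    have hbe : b * e = 0 := by
      have : b ∈ NSet b := ⟨1, (one_mul b).symm⟩
      rw [hNb] at this; exact this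
    have lemNe : ∀ z : N, z ∈ NSet e → z * e = 0 → z = 0 := by
      rintro z ⟨m, rfl⟩ hz
      calc m * e = m * (e * e) := by rw [hid]
        _ = (m * e) * e := by rw [mul_assoc]
        _ = 0 := hz
    have h1eb : (1 - e) * b = b := by
      rw [zsn_sm, one_mul, heb, sub_zero]
    have hb1e : b * (1 - e) = b := by
      have hde : (b * (1 - e) + -b) * e = 0 := by
        rw [zsn_rd, zsn_nm, mul_assoc, zsn_1e_e e hid, zsn_mz, hbe, neg_zero, add_zero]
      have hdb : (b * (1 - e) + -b) * b = 0 := by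
        rw [zsn_rd, zsn_nm, mul_assoc, h1eb, add_neg_cancel]
      have hdNe : (b * (1 - e) + -b) ∈ NSet e := by
        rw [hNe]; exact hdb
      have hd0 := lemNe _ hdNe hde
      exact add_neg_eq_zero.mp hd0
    have star : ∀ y : N, y * e = 0 → y * (1 - e) = y := by
      intro y hy
      have hyb : y ∈ NSet b := by rw [hNb]; exact hy
      obtain ⟨m, rfl⟩ := hyb
      rw [mul_assoc, hb1e]
    have e1e : e * (1 - e) = 0 := by
      have hwe : (e * (1 - e)) * e = 0 := by rw [mul_assoc, zsn_1e_e e hid, zsn_mz]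
      have hwb : (e * (1 - e)) * b = 0 := by rw [mul_assoc, h1eb, heb]
      exact lemNe _ (by rw [hNe]; exact hwb) hwe
    intro x
    have ha : (-(x * e) + x) * e = 0 := by
      rw [zsn_rd, zsn_nm, mul_assoc, hid, neg_add_cancel]
    have hfin := star _ ha
    rw [zsn_rd, zsn_nm, mul_assoc, e1e, zsn_mz, neg_zero, zero_add] at hfin
    exact hfin
  tfae_finish
end

section
/- Let N be a Boolean zero-symmetric unital right near-ring, i.e., every element of N is idempotent. Then the addition of N is commutative, the multiplication of N is commutative, the left distributive law x·(y+z) = x·y + x·z holds for all x,y,z ∈ N (so N is a commutative ring), and every element of N is left morphic. -/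
open ZSNearRing

section Aux

variable {N : Type*} [ZSNearRing N]

private lemma zsr_zero_mul (x : N) : (0 : N) * x = 0 := by
  have h := ZSNearRing.right_distrib (0 : N) 0 x
  rw [add_zero] at h
  have h2 : (0 : N) * x + 0 * x = 0 * x + 0 := by rw [add_zero]; exact h.symm
  exact (add_left_cancel h2)

private lemma zsr_add_self (hB : ∀ a : N, a * a = a) (x : N) : x + x = 0 := by
  have h2 : ((1 : N) + 1) * ((1 : N) + 1) = (1 + 1) + (1 + 1) := by
    rw [ZSNearRing.right_distrib, one_mul]
  rw [hB ((1 : N) + 1)] at h2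
  have h3 : (1 : N) + 1 = 0 := by
    have : (0 : N) + ((1:N)+1) = ((1:N)+1) + ((1:N)+1) := by rw [zero_add]; exact h2
    exact (add_right_cancel this).symm
  have h4 : x + x = ((1 : N) + 1) * x := by
    rw [ZSNearRing.right_distrib, one_mul]
  rw [h4, h3, zsr_zero_mul]

private lemma zsr_neg (hB : ∀ a : N, a * a = a) (x : N) : -x = x :=
  neg_eq_of_add_eq_zero_right (zsr_add_self hB x)

/-- From `a + b = 0` conclude `a = b` (exponent 2). -/
private lemma zsr_eq_of_add (hB : ∀ a : N, a * a = a) {a b : N} (h : a + b = 0) :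
    a = b := by
  have h2 := neg_eq_of_add_eq_zero_right h
  rw [zsr_neg hB a] at h2
  exact h2

private lemma zsr_add_comm (hB : ∀ a : N, a * a = a) (x y : N) : x + y = y + x := by
  have h := zsr_neg hB (x + y)
  rw [neg_add_rev, zsr_neg hB x, zsr_neg hB y] at h
  exact h.symm

private lemma zsr_cancel {a b : N} (h : a + b = a) : b = 0 := by
  have : a + b = a + 0 := by rw [add_zero]; exact h
  exact add_left_cancel this

private lemma zsr_sum4 (hB : ∀ a : N, a * a = a) (a b : N) : (a + b) + (b + a) = 0 := by
  rw [zsr_add_comm hB b a, zsr_add_self hB]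

/-- (A): `a * (1 + a) = 0`. -/
private lemma zsr_A (hB : ∀ a : N, a * a = a) (a : N) : a * (1 + a) = 0 := by
  have h := hB (1 + a)
  rw [ZSNearRing.right_distrib, one_mul] at h
  exact zsr_cancel h

/-- `(1 + a) * a = 0`. -/
private lemma zsr_A' (hB : ∀ a : N, a * a = a) (a : N) : (1 + a) * a = 0 := by
  rw [ZSNearRing.right_distrib, one_mul, hB, zsr_add_self hB]

/-- (G): `x * (y * x) = y * x`. -/
private lemma zsr_G (hB : ∀ a : N, a * a = a) (x y : N) : x * (y * x) = y * x := by
  have h0 : (x + y) * (1 + (x + y)) = 0 := zsr_A hB (x + y)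
  rw [ZSNearRing.right_distrib] at h0
  have h1 : x * (1 + (x + y)) = y * (1 + (x + y)) := zsr_eq_of_add hB h0
  have hcx : (1 + (x + y)) * x = y * x := by
    rw [ZSNearRing.right_distrib, one_mul, ZSNearRing.right_distrib, hB x,
      ← add_assoc, zsr_add_self hB, zero_add]
  calc x * (y * x) = x * ((1 + (x + y)) * x) := by rw [hcx]
    _ = (x * (1 + (x + y))) * x := (mul_assoc _ _ _).symm
    _ = (y * (1 + (x + y))) * x := by rw [h1]
    _ = y * ((1 + (x + y)) * x) := mul_assoc _ _ _
    _ = y * (y * x) := by rw [hcx]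
    _ = (y * y) * x := (mul_assoc _ _ _).symm
    _ = y * x := by rw [hB]

/-- Key lemma: if `r * b = 0` and `r * (1+b) = 0` then `r = 0`. -/
private lemma zsr_Z (hB : ∀ a : N, a * a = a) {r b : N}
    (h1 : r * b = 0) (h2 : r * (1 + b) = 0) : r = 0 := by
  have hbr : b * r = 0 := by
    have h := zsr_G hB r b
    rw [← mul_assoc, h1, zsr_zero_mul] at h
    exact h.symm
  have h3 : (1 + b) * r = 0 := by
    have h := zsr_G hB r (1 + b)
    rw [← mul_assoc, h2, zsr_zero_mul] at h
    exact h.symm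
  rw [ZSNearRing.right_distrib, one_mul, hbr, add_zero] at h3
  exact h3

/-- (N): `x * (1 + a) = x + x * a`. -/
private lemma zsr_Nlem (hB : ∀ a : N, a * a = a) (x a : N) :
    x * (1 + a) = x + x * a := by
  have key : x * (1 + a) + (x + x * a) = 0 := by
    refine zsr_Z hB (b := a) ?_ ?_
    · rw [ZSNearRing.right_distrib, ZSNearRing.right_distrib, mul_assoc x (1 + a) a,
        zsr_A' hB a, ZSNearRing.mul_zero, zero_add, mul_assoc x a a, hB a,
        zsr_add_self hB]
    · rw [ZSNearRing.right_distrib, ZSNearRing.right_distrib,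
        mul_assoc x (1 + a) (1 + a), hB (1 + a), mul_assoc x a (1 + a),
        zsr_A hB a, ZSNearRing.mul_zero, add_zero, zsr_add_self hB]
  exact zsr_eq_of_add hB key

/-- (P): `x * (u + u * v) = x * u + x * (u * v)`. -/
private lemma zsr_P (hB : ∀ a : N, a * a = a) (x u v : N) :
    x * (u + u * v) = x * u + x * (u * v) := by
  calc x * (u + u * v) = x * (u * (1 + v)) := by rw [zsr_Nlem hB u v]
    _ = (x * u) * (1 + v) := (mul_assoc _ _ _).symm
    _ = x * u + (x * u) * v := zsr_Nlem hB (x * u) v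
    _ = x * u + x * (u * v) := by rw [mul_assoc]

/-- (P'): `x * (z + y * z) = x * z + x * y * z`. -/
private lemma zsr_P' (hB : ∀ a : N, a * a = a) (x y z : N) :
    x * (z + y * z) = x * z + x * y * z := by
  have h1 : (1 + y) * z = z + y * z := by rw [ZSNearRing.right_distrib, one_mul]
  rw [← h1, ← mul_assoc, zsr_Nlem hB x y, ZSNearRing.right_distrib, mul_assoc]

private lemma zsr_ldistrib (hB : ∀ a : N, a * a = a) (x y z : N) :
    x * (y + z) = x * y + x * z := by
  have key : x * (y + z) + (x * y + x * z) = 0 := by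
    refine zsr_Z hB (b := z) ?_ ?_
    · -- s * z = 0
      have hyz : x * (y + z) * z = x * z + x * y * z := by
        rw [mul_assoc, ZSNearRing.right_distrib, hB z,
          zsr_add_comm hB (y * z) z, zsr_P' hB]
      rw [ZSNearRing.right_distrib, ZSNearRing.right_distrib, hyz,
        mul_assoc x z z, hB z]
      exact zsr_sum4 hB (x * z) (x * y * z)
    · -- s * (1 + z) = 0
      have h1 : x * (y + z) * (1 + z) = x * y + x * y * z := by
        have h2 : (y + z) * (1 + z) = y + y * z := by
          rw [ZSNearRing.right_distrib, zsr_Nlem hB y z, zsr_A hB z, add_zero]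
        rw [mul_assoc, h2, zsr_P hB, mul_assoc]
      have h3 : x * y * (1 + z) = x * y + x * y * z := zsr_Nlem hB (x * y) z
      have h4 : x * z * (1 + z) = 0 := by
        rw [mul_assoc, zsr_A hB z, ZSNearRing.mul_zero]
      rw [ZSNearRing.right_distrib, ZSNearRing.right_distrib, h1, h3, h4, add_zero]
      exact zsr_add_self hB _
  exact zsr_eq_of_add hB key

private lemma zsr_mul_comm (hB : ∀ a : N, a * a = a) (x y : N) : x * y = y * x := by
  have h : x + y = x + (y * x + (x * y + y)) := by
    conv_lhs => rw [← hB (x + y)]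
    rw [zsr_ldistrib hB (x + y) x y, ZSNearRing.right_distrib, ZSNearRing.right_distrib,
      hB x, hB y, add_assoc]
  have h2 : y = y * x + (x * y + y) := add_left_cancel h
  have h3 : (y * x + x * y) + y = 0 + y := by rw [zero_add, add_assoc]; exact h2.symm
  have h4 : y * x + x * y = 0 := add_right_cancel h3
  exact (zsr_eq_of_add hB h4).symm

end Aux

theorem stmt11 {N : Type*} [ZSNearRing N]
    (hB : ∀ a : N, a * a = a) :
    (∀ x y : N, x + y = y + x) ∧
    (∀ x y : N, x * y = y * x) ∧
    (∀ x y z : N, x * (y + z) = x * y + x * z) ∧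
    (∀ a : N, IsLeftMorphic a) := by
  refine ⟨zsr_add_comm hB, zsr_mul_comm hB, zsr_ldistrib hB, ?_⟩
  intro a
  refine ⟨1 + a, ?_, ?_⟩
  · ext x
    simp only [NSet, lAnn, Set.mem_setOf_eq]
    constructor
    · rintro ⟨n, rfl⟩
      rw [mul_assoc, zsr_A hB a, ZSNearRing.mul_zero]
    · intro hx
      refine ⟨x, ?_⟩
      rw [zsr_Nlem hB x a] at hx
      exact zsr_eq_of_add hB hx
  · ext x
    simp only [NSet, lAnn, Set.mem_setOf_eq]
    constructor
    · rintro ⟨n, rfl⟩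
      rw [mul_assoc, zsr_A' hB a, ZSNearRing.mul_zero]
    · intro hx
      refine ⟨x, ?_⟩
      rw [zsr_Nlem hB x a, hx, add_zero]
end

section
/- Let N be a zero-symmetric unital right near-ring. Then N is reduced and left morphic if and only if N is left strongly regular. -/
open ZSNearRing

namespace ZSNRProof

variable {N : Type*} [ZSNearRing N]

lemma rd (x y z : N) : (x + y) * z = x * z + y * z := ZSNearRing.right_distrib x y z

lemma mz (x : N) : x * (0 : N) = 0 := ZSNearRing.mul_zero x

lemma zm (x : N) : (0 : N) * x = 0 := by
  have h := rd (0 : N) 0 x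
  rw [add_zero] at h
  exact (left_eq_add.mp h)

lemma nm (p q : N) : (-p) * q = -(p * q) := by
  have h := rd (-p) p q
  rw [neg_add_cancel, zm] at h
  exact eq_neg_of_add_eq_zero_left h.symm

/-- swap of annihilation in a reduced near-ring -/
lemma swp (hr : ∀ p : N, p * p = 0 → p = 0) {p q : N} (h : p * q = 0) : q * p = 0 := by
  apply hr
  rw [mul_assoc, ← mul_assoc p q p, h, zm, mz]

/-- insertion property (IFP) in a reduced near-ring -/
lemma ifp (hr : ∀ p : N, p * p = 0 → p = 0) {p q : N} (h : p * q = 0) (n : N) :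
    (p * n) * q = 0 := by
  have hqp : q * p = 0 := swp hr h
  apply hr
  simp only [mul_assoc]
  rw [← mul_assoc q p, hqp, zm, mz, mz]

/-- Strong regularity at `a` yields that `a` is left morphic. -/
lemma morphic_of_sr (hr : ∀ p : N, p * p = 0 → p = 0) (a x : N)
    (hx : a = x * (a * a)) : IsLeftMorphic a := by
  set e : N := x * a with he
  have hea : e * a = a := by rw [he, mul_assoc]; exact hx.symm
  -- a * e = a
  have hae : a * e = a := by
    set c : N := a * e + -a with hc
    have hca : c * a = 0 := by
      rw [hc, rd, nm, mul_assoc, hea, add_neg_cancel]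
    have hac : a * c = 0 := swp hr hca
    have hec : e * c = 0 := by rw [he, mul_assoc, hac, mz]
    have hcc : c * c = 0 := by
      rw [hc, rd, nm, mul_assoc, hec, mz, hac, neg_zero, add_zero]
    have := hr c hcc
    rw [hc] at this
    exact add_neg_eq_zero.mp this
  have hee : e * e = e := by rw [he, mul_assoc, hae]
  set f : N := -e + 1 with hf
  have hfa : f * a = 0 := by rw [hf, rd, nm, one_mul, hea, neg_add_cancel]
  have hfe : f * e = 0 := by rw [hf, rd, nm, one_mul, hee, neg_add_cancel]
  have hef : e * f = 0 := swp hr hfe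
  have haf : a * f = 0 := swp hr hfa
  have hff : f * f = f := by rw [hf, rd, nm, one_mul, hef, neg_zero, zero_add]
  have hef1 : e + f = 1 := by rw [hf, ← add_assoc, add_neg_cancel, zero_add]
  have key : ∀ w : N, w * e = 0 → w * f = 0 → w = 0 := by
    intro w h1 h2
    have h1' := swp hr h1
    have h2' := swp hr h2
    have h3 : (e + f) * w = 0 := by rw [rd, h1', h2', add_zero]
    rwa [hef1, one_mul] at h3
  refine ⟨f, ?_, ?_⟩
  · -- NSet a = lAnn f
    ext y
    constructor
    · rintro ⟨n, rfl⟩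
      show (n * a) * f = 0
      rw [mul_assoc, haf, mz]
    · intro hy
      have hyf : y * f = 0 := hy
      have hw : y + -(y * e) = 0 := by
        apply key
        · rw [rd, nm, mul_assoc, hee, add_neg_cancel]
        · rw [rd, nm, mul_assoc, hef, mz, neg_zero, hyf, add_zero]
      have hye : y = y * e := by
        have := add_neg_eq_zero.mp hw
        exact this
      exact ⟨y * x, by rw [mul_assoc]; exact hye⟩
  · -- NSet f = lAnn a
    ext y
    constructor
    · rintro ⟨n, rfl⟩
      show (n * f) * a = 0
      rw [mul_assoc, hfa, mz]
    · intro hy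
      have hya : y * a = 0 := hy
      have hye : y * e = 0 := by
        have := ifp hr hya x
        rw [he, ← mul_assoc]
        exact this
      have hw : y + -(y * f) = 0 := by
        apply key
        · rw [rd, nm, mul_assoc, hfe, mz, neg_zero, hye, add_zero]
        · rw [rd, nm, mul_assoc, hff, add_neg_cancel]
      have hyf : y = y * f := add_neg_eq_zero.mp hw
      exact ⟨y, hyf⟩

end ZSNRProof

open ZSNRProof

theorem stmt12 {N : Type*} [ZSNearRing N] :
    ((∀ a : N, ∀ n : ℕ, 1 ≤ n → a ^ n = 0 → a = 0) ∧ (∀ a : N, IsLeftMorphic a)) ↔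
      (∀ a : N, ∃ x : N, a = x * (a * a)) := by
  constructor
  · rintro ⟨hred, hmor⟩ a
    have hr : ∀ p : N, p * p = 0 → p = 0 := by
      intro p h
      exact hred p 2 (by norm_num) (by rwa [pow_two])
    obtain ⟨b, hb1, hb2⟩ := hmor a
    obtain ⟨c, hc1, hc2⟩ := hmor (a * a)
    -- lAnn a = lAnn (a*a)
    have hann : lAnn a = lAnn (a * a) := by
      ext y
      constructor
      · intro hy
        show y * (a * a) = 0
        rw [← mul_assoc, hy, zm]
      · intro hy
        have hy' : y * (a * a) = 0 := hy
        have t0 : a * (y * a) = 0 := by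
          apply hr
          rw [mul_assoc, ← mul_assoc (y*a) a (y*a), mul_assoc y a a, hy', zm, mz]
        show y * a = 0
        apply hr
        rw [mul_assoc, t0, mz]
    have hNbc : NSet b = NSet c := by rw [hb2, hc2, hann]
    have hbc : b ∈ NSet c := by rw [← hNbc]; exact ⟨1, (one_mul b).symm⟩
    have hcb : c ∈ NSet b := by rw [hNbc]; exact ⟨1, (one_mul c).symm⟩
    obtain ⟨m, hm⟩ := hbc
    obtain ⟨n, hn⟩ := hcb
    have hannbc : lAnn b = lAnn c := by
      ext y
      constructor
      · intro hy
        show y * c = 0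
        rw [hn, ← mul_assoc]
        exact ifp hr hy n
      · intro hy
        show y * b = 0
        rw [hm, ← mul_assoc]
        exact ifp hr hy m
    have : NSet a = NSet (a * a) := by rw [hb1, hannbc, ← hc1]
    have ha : a ∈ NSet (a * a) := by rw [← this]; exact ⟨1, (one_mul a).symm⟩
    exact ha
  · intro hsr
    have hr : ∀ p : N, p * p = 0 → p = 0 := by
      intro p h
      obtain ⟨y, hy⟩ := hsr p
      rw [hy, h, mz]
    constructor
    · intro a n hn h
      obtain ⟨x, hx⟩ := hsr a
      have hx2 : a = x * a ^ 2 := by rwa [pow_two]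
      have claim : ∀ k : ℕ, a = x ^ k * a ^ (k + 1) := by
        intro k
        induction k with
        | zero => simp
        | succ k ih =>
          have hstep : a ^ (k + 1) = x * a ^ (k + 2) := by
            calc a ^ (k + 1) = a * a ^ k := by rw [pow_succ']
              _ = (x * (a * a)) * a ^ k := by rw [← hx]
              _ = x * ((a * a) * a ^ k) := by rw [mul_assoc]
              _ = x * a ^ (k + 2) := by rw [← pow_two, ← pow_add, Nat.add_comm 2 k]
          calc a = x ^ k * a ^ (k + 1) := ih
            _ = x ^ k * (x * a ^ (k + 2)) := by rw [hstep]
            _ = (x ^ k * x) * a ^ (k + 2) := by rw [mul_assoc]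
            _ = x ^ (k + 1) * a ^ (k + 2) := by rw [← pow_succ x k]
      have := claim (n - 1)
      rw [Nat.sub_add_cancel hn, h, mz] at this
      exact this
    · intro a
      obtain ⟨x, hx⟩ := hsr a
      exact morphic_of_sr hr a x hx
end

section
/- Let M₀(ℤ₃) denote the set of all functions f : ℤ/3ℤ → ℤ/3ℤ with f(0) = 0, a near-ring under pointwise addition and composition as multiplication. Then M₀(ℤ₃) is not left morphic: there exists f ∈ M₀(ℤ₃) (for instance f with f(1) = 1 and f(2) = 1) such that there is no g ∈ M₀(ℤ₃) with {n ∘ f : n ∈ M₀(ℤ₃)} = {h ∈ M₀(ℤ₃) : h ∘ g = 0} and {n ∘ g : n ∈ M₀(ℤ₃)} = {h ∈ M₀(ℤ₃) : h ∘ f = 0}. -/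
/-!
Every `f` lies in its own left ideal `N f`, as `f = id ∘ f`. So `N f = (0 :ₗ g)` forces
`f ∘ g = 0`, and when `f` vanishes only at `0` this makes `g = 0`. Then `(0 :ₗ g)` is everything,
so `id = n ∘ f` for some `n`, i.e. `f` is injective; the map sending `1` and `2` to `1` is not.
-/

/-- `M₀(ℤ₃)`: all maps `f : ℤ/3ℤ → ℤ/3ℤ` with `f 0 = 0`, a zero-symmetric
unital right near-ring under pointwise addition and composition. -/
def M0Z3 : Type := {f : ZMod 3 → ZMod 3 // f 0 = 0}

namespace M0Z3

/-- `N f` in the paper's notation. -/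
def leftMul (f : M0Z3) : Set M0Z3 := {h | ∃ n : M0Z3, h.1 = n.1 ∘ f.1}

/-- `(0 :ₗ g)` in the paper's notation. -/
def leftAnn (g : M0Z3) : Set M0Z3 := {h | h.1 ∘ g.1 = fun _ => 0}

theorem self_mem_leftMul (f : M0Z3) : f ∈ leftMul f := ⟨⟨id, rfl⟩, rfl⟩

theorem injective_of_id_mem_leftMul {f : M0Z3} (h : ⟨id, rfl⟩ ∈ leftMul f) :
    Function.Injective f.1 := by
  obtain ⟨n, hn⟩ := h
  exact Function.LeftInverse.injective (g := n.1) fun x => (congrFun hn x).symm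

theorem leftMul_ne_leftAnn {f : M0Z3} (hf0 : ∀ x, f.1 x = 0 → x = 0)
    (hf : ¬ Function.Injective f.1) (g : M0Z3) : leftMul f ≠ leftAnn g := by
  intro h
  have hfg : f ∈ leftAnn g := h ▸ self_mem_leftMul f
  have hg : ∀ x, g.1 x = 0 := fun x => hf0 _ (congrFun hfg x)
  have hid : (⟨id, rfl⟩ : M0Z3) ∈ leftMul f := h ▸ funext hg
  exact hf (injective_of_id_mem_leftMul hid)

end M0Z3

theorem stmt16 :
    ∃ f : M0Z3, f.1 1 = 1 ∧ f.1 2 = 1 ∧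
      ¬ ∃ g : M0Z3,
        ({h : M0Z3 | ∃ n : M0Z3, h.1 = n.1 ∘ f.1} =
          {h : M0Z3 | h.1 ∘ g.1 = fun _ => 0}) ∧
        ({h : M0Z3 | ∃ n : M0Z3, h.1 = n.1 ∘ g.1} =
          {h : M0Z3 | h.1 ∘ f.1 = fun _ => 0}) := by
  let f : M0Z3 := ⟨fun y => if y = 0 then 0 else 1, if_pos rfl⟩
  have hf0 : ∀ x, f.1 x = 0 → x = 0 := by decide
  have hf : ¬ Function.Injective f.1 := fun h => absurd (@h 1 2 rfl) (by decide)
  refine ⟨f, rfl, rfl, ?_⟩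
  rintro ⟨g, hfg, -⟩
  exact M0Z3.leftMul_ne_leftAnn hf0 hf g hfg
end

section
/- Let R be a unit-regular ring and M a nonzero left R-module. Let N = R × M with componentwise addition and multiplication (a₁,m₁)⋆(a₂,m₂) = (a₁a₂, a₁m₂ + m₁). Then N is a unital right near-ring with identity (1,0), and N is unit-regular: for every (a,m) ∈ N there exists (u,n) ∈ N having a two-sided ⋆-inverse such that (a,m)⋆(u,n)⋆(a,m) = (a,m). -/
/-- The near-ring multiplication on `R × M`:
`(a₁, m₁) ⋆ (a₂, m₂) = (a₁·a₂, a₁•m₂ + m₁)`. -/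
def nmul {R M : Type*} [Ring R] [AddCommGroup M] [Module R M]
    (p q : R × M) : R × M :=
  (p.1 * q.1, p.1 • q.2 + p.2)

theorem stmt17 {R M : Type*} [Ring R] [AddCommGroup M] [Module R M]
    (hR : ∀ a : R, ∃ u : R, (∃ v : R, u * v = 1 ∧ v * u = 1) ∧ a = a * u * a)
    (hM : ∃ m : M, m ≠ 0) :
    -- `⋆` is associative
    (∀ p q r : R × M, nmul (nmul p q) r = nmul p (nmul q r)) ∧
    -- `(1, 0)` is a two-sided identity for `⋆`, and `(1,0) ≠ (0,0)`
    (∀ p : R × M, nmul ((1 : R), (0 : M)) p = p) ∧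
    (∀ p : R × M, nmul p ((1 : R), (0 : M)) = p) ∧
    ((1 : R), (0 : M)) ≠ ((0 : R), (0 : M)) ∧
    -- right distributivity over componentwise addition
    (∀ p q r : R × M, nmul (p + q) r = nmul p r + nmul q r) ∧
    -- `N` is unit-regular
    (∀ p : R × M, ∃ u : R × M,
      (∃ v : R × M, nmul u v = ((1 : R), (0 : M)) ∧ nmul v u = ((1 : R), (0 : M))) ∧
      nmul (nmul p u) p = p) := by
  refine ⟨?_, ?_, ?_, ?_, ?_, ?_⟩
  · intro p q r
    simp [nmul, mul_assoc, mul_smul, smul_add, add_assoc]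
  · intro p; simp [nmul]
  · intro p; simp [nmul]
  · intro h
    obtain ⟨m, hm⟩ := hM
    have h1 : (1 : R) = 0 := congrArg Prod.fst h
    exact hm (by calc m = (1 : R) • m := (one_smul R m).symm
      _ = (0 : R) • m := by rw [h1]
      _ = 0 := zero_smul R m)
  · intro p q r
    simp [nmul, Prod.ext_iff, add_mul, add_smul]
    abel
  · intro p
    obtain ⟨u, ⟨v, huv, hvu⟩, hreg⟩ := hR p.1
    refine ⟨(u, -(u • p.2)), ⟨(v, -(v • -(u • p.2))), ?_, ?_⟩, ?_⟩
    · simp only [nmul, Prod.ext_iff]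
      constructor
      · simp [huv]
      · simp [smul_smul, mul_assoc, hvu]
    · simp [nmul, Prod.ext_iff, hvu]
    · simp only [nmul, Prod.ext_iff]
      constructor
      · exact hreg.symm
      · simp [mul_smul, smul_neg, smul_add]
end
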